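/- For all n ∈ {2,3,...}, p ∈ (0,1) and t ≥ 0, the number Y of isolated vertices in G(n,p) satisfies the left tail bound P((Y-μ)/σ ≤ -t) ≤ exp(-t²σ²/(4μ)). -/

import Mathlib

/-!
For `θ ≤ 0` let `Y⁽ᵛ⁾` count the isolated vertices once the edges at `v` are deleted. It is
independent of the event that `v` is isolated, and equals `Y` on that event, so
`E[Y e^{θY}] = (1-p)^{n-1} ∑ᵥ E[e^{θY⁽ᵛ⁾}]`. Deleting the edges at `v` isolates at most `v` and the
pendant neighbours of `v`, so `∑ᵥ Y⁽ᵛ⁾ ≤ nY + 2n`, and convexity of `exp` gives the differential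
inequality `E[Y e^{θY}] ≥ μ e^{2θ} E[e^{θY}]` for the moment generating function. Bounding
`e^{2θ} ≥ 1 + 2θ` and integrating gives `E[e^{-xY}] ≤ e^{μ(x² - x)}`, and Chernoff's bound at
`x = tσ/(2μ)` gives the claim.
-/

open MeasureTheory ProbabilityTheory Real Finset

noncomputable section

namespace ErdosRenyiIsolated

/-- Index set for the potential edges of a graph on `Fin n`. -/
abbrev EdgeIdx (n : ℕ) := {e : Fin n × Fin n // e.1 < e.2}

/-- Adjacency relation of the random graph encoded by `ω` : `u` and `v` are adjacent
if the corresponding edge indicator is `true`. -/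
def adj {n : ℕ} (ω : EdgeIdx n → Bool) (u v : Fin n) : Prop :=
  if h : u < v then ω ⟨(u, v), h⟩ = true
  else if h' : v < u then ω ⟨(v, u), h'⟩ = true
  else False

instance {n : ℕ} (ω : EdgeIdx n → Bool) (u v : Fin n) : Decidable (adj ω u v) := by
  unfold adj
  split
  · exact inferInstance
  · split
    · exact inferInstance
    · exact inferInstance

/-- Degree of vertex `v` in the graph encoded by `ω`. -/
def deg {n : ℕ} (ω : EdgeIdx n → Bool) (v : Fin n) : ℕ :=
  (Finset.univ.filter fun w => adj ω v w).card

/-- The number of isolated vertices of the graph encoded by `ω`. -/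
def isolCount {n : ℕ} (ω : EdgeIdx n → Bool) : ℕ :=
  (Finset.univ.filter fun v => deg ω v = 0).card

/-- The Bernoulli(p) measure on `Bool`. -/
def bern (p : ℝ) : Measure Bool :=
  ENNReal.ofReal p • Measure.dirac true + ENNReal.ofReal (1 - p) • Measure.dirac false

instance (p : ℝ) : IsFiniteMeasure (bern p) := by
  constructor
  have h : bern p Set.univ ≤ ENNReal.ofReal p + ENNReal.ofReal (1 - p) := by
    simp [bern]
  exact lt_of_le_of_lt h (ENNReal.add_lt_top.mpr ⟨ENNReal.ofReal_lt_top, ENNReal.ofReal_lt_top⟩)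

/-- The Erdős–Rényi random graph measure `G(n,p)`: the edge indicators are i.i.d.
Bernoulli(p). -/
def gnp (n : ℕ) (p : ℝ) : Measure (EdgeIdx n → Bool) :=
  Measure.pi fun _ => bern p

/-- The Erdős–Rényi measure together with an independent uniformly chosen vertex. -/
def gnpV (n : ℕ) (p : ℝ) : Measure ((EdgeIdx n → Bool) × Fin n) :=
  (gnp n p).prod (uniformOn (Set.univ : Set (Fin n)))

/-- Adjacency in the graph obtained by deleting all edges incident to `v'`. -/
def adjDel {n : ℕ} (ω : EdgeIdx n → Bool) (v' u v : Fin n) : Prop :=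
  adj ω u v ∧ u ≠ v' ∧ v ≠ v'

instance {n : ℕ} (ω : EdgeIdx n → Bool) (v' u v : Fin n) : Decidable (adjDel ω v' u v) := by
  unfold adjDel; exact inferInstance

/-- Degree of `v` in the graph `ω` with all edges incident to `v'` deleted. -/
def degDel {n : ℕ} (ω : EdgeIdx n → Bool) (v' v : Fin n) : ℕ :=
  (Finset.univ.filter fun w => adjDel ω v' v w).card

/-- Number of isolated vertices in the graph `ω` with all edges incident to `v'` deleted. -/
def isolCountDel {n : ℕ} (ω : EdgeIdx n → Bool) (v' : Fin n) : ℕ :=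
  (Finset.univ.filter fun v => degDel ω v' v = 0).card

end ErdosRenyiIsolated

theorem DependsOn.comp_updateFinset_restrict {ι : Type*} [DecidableEq ι] {Ω : ι → Type*}
    {β : Type*} {f : (∀ i, Ω i) → β} {S : Finset ι} (hf : DependsOn f S) (x₀ : ∀ i, Ω i) :
    (f ∘ Function.updateFinset x₀ S) ∘ S.restrict = f :=
  funext fun _ => hf fun i hi => by simp [Function.updateFinset, Finset.mem_coe.mp hi]

theorem indepFun_pi_of_dependsOn {ι : Type*} [Fintype ι] [DecidableEq ι] {Ω : ι → Type*}
    [∀ i, MeasurableSpace (Ω i)] {P : ∀ i, Measure (Ω i)} [∀ i, IsProbabilityMeasure (P i)]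
    {β γ : Type*} [MeasurableSpace β] [MeasurableSpace γ]
    {f : (∀ i, Ω i) → β} {g : (∀ i, Ω i) → γ} (hf : Measurable f) (hg : Measurable g)
    (S : Finset ι) (hfS : DependsOn f S) (hgS : DependsOn g (↑S)ᶜ) :
    IndepFun f g (Measure.pi P) := by
  let x₀ : ∀ i, Ω i := fun i => (nonempty_of_isProbabilityMeasure (P i)).some
  have hind := (iIndepFun_pi (μ := P) (X := fun _ => id) fun _ => aemeasurable_id)
    |>.indepFun_finset S Sᶜ disjoint_compl_right fun i => measurable_pi_apply i
  rw [← hfS.comp_updateFinset_restrict x₀,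
    ← DependsOn.comp_updateFinset_restrict (f := g) (S := Sᶜ) (by simpa using hgS) x₀]
  exact hind.comp (hf.comp measurable_updateFinset) (hg.comp measurable_updateFinset)

theorem monotoneOn_mul_exp_neg_of_le_deriv {f f' A a : ℝ → ℝ} {D : Set ℝ} (hD : Convex ℝ D)
    (hf : ∀ x, HasDerivAt f (f' x) x) (hA : ∀ x, HasDerivAt A (a x) x)
    (h : ∀ x ∈ interior D, a x * f x ≤ f' x) :
    MonotoneOn (fun x => f x * exp (-A x)) D := by
  have hd : ∀ x, HasDerivAt (fun x => f x * exp (-A x))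
      ((f' x - a x * f x) * exp (-A x)) x := fun x =>
    ((hf x).mul (hA x).fun_neg.exp).congr_deriv (by ring)
  refine monotoneOn_of_deriv_nonneg hD (fun x _ => (hd x).continuousAt.continuousWithinAt)
    (fun x _ => (hd x).differentiableAt.differentiableWithinAt) fun x hx => ?_
  rw [(hd x).deriv]
  exact mul_nonneg (sub_nonneg.mpr (h x hx)) (exp_pos _).le

theorem mgf_neg_le_of_le_integral_mul_exp {Ω : Type*} [MeasurableSpace Ω] {P : Measure Ω}
    [IsProbabilityMeasure P] {X : Ω → ℝ} (hX : ∀ t, Integrable (fun ω => exp (t * X ω)) P)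
    {c K : ℝ} (hc : 0 ≤ c)
    (h : ∀ θ ≤ 0, c * exp (K * θ) * mgf X P θ ≤ P[fun ω => X ω * exp (θ * X ω)])
    {x : ℝ} (hx : 0 ≤ x) : mgf X P (-x) ≤ exp (c * (K / 2 * x ^ 2 - x)) := by
  have hmgf : ∀ θ, HasDerivAt (mgf X P) P[fun ω => X ω * exp (θ * X ω)] θ := fun θ =>
    hasDerivAt_mgf (by simp [integrableExpSet, hX])
  -- the antiderivative of the weakened rate `c * (1 + K * θ) ≤ c * exp (K * θ)`
  have hA : ∀ θ : ℝ, HasDerivAt (fun θ => c * (θ + K / 2 * θ ^ 2)) (c * (1 + K * θ)) θ :=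
    fun θ => (((hasDerivAt_id θ).add ((hasDerivAt_pow 2 θ).const_mul (K / 2))).const_mul c)
      |>.congr_deriv (by simp only [Nat.cast_ofNat, Nat.add_one_sub_one, pow_one]; ring)
  have hmono := monotoneOn_mul_exp_neg_of_le_deriv (convex_Iic 0) hmgf hA fun θ hθ => by
    have hθ : θ ≤ 0 := (interior_subset hθ : θ ∈ Set.Iic 0)
    have := add_one_le_exp (K * θ)
    calc c * (1 + K * θ) * mgf X P θ ≤ c * exp (K * θ) * mgf X P θ := by
          gcongr
          · exact mgf_nonneg
          · linarith
      _ ≤ _ := h θ hθ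
  have := hmono (show -x ∈ Set.Iic 0 by simpa) (show (0:ℝ) ∈ Set.Iic 0 by simp) (by linarith)
  simp only [mgf_zero] at this
  rw [← le_div_iff₀ (exp_pos _), one_mul, ← exp_sub] at this
  exact this.trans_eq (by congr 1; ring)

theorem measure_le_sub_le_exp_of_le_integral_mul_exp {Ω : Type*} [MeasurableSpace Ω]
    {P : Measure Ω} [IsProbabilityMeasure P] {X : Ω → ℝ}
    (hX : ∀ t, Integrable (fun ω => exp (t * X ω)) P) {c K : ℝ} (hc : 0 < c) (hK : 0 < K)
    (h : ∀ θ ≤ 0, c * exp (K * θ) * mgf X P θ ≤ P[fun ω => X ω * exp (θ * X ω)])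
    {s : ℝ} (hs : 0 ≤ s) : P.real {ω | X ω ≤ c - s} ≤ exp (-s ^ 2 / (2 * K * c)) := by
  set x := s / (K * c) with hx_def
  have hx : 0 ≤ x := by positivity
  calc P.real {ω | X ω ≤ c - s} ≤ exp (-(-x) * (c - s)) * mgf X P (-x) :=
        measure_le_le_exp_mul_mgf _ (by linarith) (hX _)
    _ ≤ exp (x * (c - s)) * exp (c * (K / 2 * x ^ 2 - x)) := by
        rw [neg_neg]
        gcongr
        exact mgf_neg_le_of_le_integral_mul_exp hX hc.le h hx
    _ = exp (-s ^ 2 / (2 * K * c)) := by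
        rw [← exp_add]
        congr 1
        rw [hx_def]
        field_simp
        ring

theorem card_mul_exp_le_sum_exp {ι : Type*} (s : Finset ι) (a : ι → ℝ) {c : ℝ}
    (h : #s * c ≤ ∑ i ∈ s, a i) : #s * exp c ≤ ∑ i ∈ s, exp (a i) :=
  calc #s * exp c ≤ ∑ i ∈ s, exp c * (a i - c + 1) := by
        rw [← mul_sum, sum_add_distrib, sum_sub_distrib]
        simp only [sum_const, nsmul_eq_mul, mul_one]
        nlinarith [exp_pos c]
    _ ≤ ∑ i ∈ s, exp (a i) := sum_le_sum fun i _ => by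
        calc exp c * (a i - c + 1) ≤ exp c * exp (a i - c) := by
              gcongr; exact add_one_le_exp _
          _ = exp (a i) := by rw [← exp_add]; ring_nf

namespace ErdosRenyiIsolated

section
variable {n : ℕ}

def incidentEdges (v : Fin n) : Finset (EdgeIdx n) := {e | e.1.1 = v ∨ e.1.2 = v}

@[simp]
theorem mem_incidentEdges {v : Fin n} {e : EdgeIdx n} :
    e ∈ incidentEdges v ↔ e.1.1 = v ∨ e.1.2 = v := by
  simp [incidentEdges]

theorem adj_comm (ω : EdgeIdx n → Bool) (u w : Fin n) : adj ω u w ↔ adj ω w u := by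
  unfold adj
  rcases lt_trichotomy u w with huw | rfl | huw
  · simp [huw, asymm huw]
  · simp
  · simp [huw, asymm huw]

theorem deg_eq_zero_iff {ω : EdgeIdx n → Bool} {v : Fin n} :
    deg ω v = 0 ↔ ∀ e ∈ incidentEdges v, ω e = false := by
  simp only [deg, card_eq_zero, filter_eq_empty_iff, mem_univ, true_implies, mem_incidentEdges]
  constructor
  · rintro h ⟨⟨a, b⟩, hab⟩ (rfl | rfl)
    · have := @h b
      rwa [adj, dif_pos hab, Bool.not_eq_true] at this
    · have := @h a
      rwa [adj, dif_neg (asymm hab), dif_pos hab, Bool.not_eq_true] at this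
  · intro h w
    unfold adj
    split_ifs <;> simp [h]

theorem card_incidentEdges (v : Fin n) : #(incidentEdges v) = n - 1 := by
  have : #({v}ᶜ : Finset (Fin n)) = n - 1 := by simp [card_compl]
  rw [← this]
  refine card_bij' (fun e _ => if e.1.1 = v then e.1.2 else e.1.1)
    (fun w hw => if h : w < v then ⟨(w, v), h⟩ else
      ⟨(v, w), lt_of_le_of_ne (not_lt.1 h) (Ne.symm (by simpa using hw))⟩) ?_ ?_ ?_ ?_
  · rintro ⟨⟨a, b⟩, hab⟩ he
    simp only [mem_incidentEdges] at he
    rcases he with rfl | rfl <;> simp [hab.ne, hab.ne']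
  · intro w hw
    split_ifs <;> simp
  · rintro ⟨⟨a, b⟩, hab⟩ he
    simp only [mem_incidentEdges] at he
    rcases he with rfl | rfl <;> simp [hab, hab.ne, asymm hab]
  · intro w hw
    simp only [mem_compl, mem_singleton] at hw
    split_ifs <;> simp_all

theorem isolCount_eq_isolCountDel {ω : EdgeIdx n → Bool} {v : Fin n} (h : deg ω v = 0) :
    isolCount ω = isolCountDel ω v := by
  have hv : ∀ w, ¬adj ω v w := by simpa [deg, filter_eq_empty_iff] using h
  unfold isolCount isolCountDel
  congr 1
  refine filter_congr fun u _ => ?_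
  by_cases hu : u = v
  · subst hu
    simp [h, degDel, adjDel]
  · have hne : ∀ w, adj ω u w → w ≠ v := fun w huw hwv =>
      hv u (hwv ▸ (adj_comm ω u w).1 huw)
    have : degDel ω v u = deg ω u := by
      unfold degDel deg adjDel
      congr 1
      exact filter_congr fun w _ => ⟨fun h => h.1, fun huw => ⟨huw, hu, hne w huw⟩⟩
    rw [this]

theorem dependsOn_isolCountDel (v : Fin n) :
    DependsOn (isolCountDel · v) (↑(incidentEdges v))ᶜ := by
  intro ω ω' hωω'
  have : ∀ u w, adjDel ω v u w ↔ adjDel ω' v u w := by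
    intro u w
    unfold adjDel adj
    by_cases hu : u = v
    · simp [hu]
    by_cases hw : w = v
    · simp [hw]
    split_ifs with huw hwu
    · rw [hωω' ⟨(u, w), huw⟩ (by simp [hu, hw])]
    · rw [hωω' ⟨(w, u), hwu⟩ (by simp [hu, hw])]
    · rfl
  simp [isolCountDel, degDel, this]

def pendantNbrs (ω : EdgeIdx n → Bool) (v : Fin n) : Finset (Fin n) :=
  {u | deg ω u = 1 ∧ adj ω u v}

theorem isolCountDel_le (ω : EdgeIdx n → Bool) (v : Fin n) :
    isolCountDel ω v ≤ isolCount ω + 1 + #(pendantNbrs ω v) := by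
  have hsub : ({u | degDel ω v u = 0} : Finset (Fin n)) ⊆
      ({u | deg ω u = 0} : Finset (Fin n)) ∪ insert v (pendantNbrs ω v) := by
    intro u hu
    simp only [pendantNbrs, mem_union, mem_insert, mem_filter, mem_univ, true_and] at hu ⊢
    by_cases h0 : deg ω u = 0
    · exact Or.inl h0
    by_cases huv : u = v
    · exact Or.inr (Or.inl huv)
    have hnbr : ({w | adj ω u w} : Finset (Fin n)) ⊆ {v} := by
      intro w hw
      by_contra hwv
      simp only [mem_filter, mem_univ, true_and, mem_singleton] at hw hwv
      have : w ∈ ({w | adjDel ω v u w} : Finset _) := by simp [adjDel, hw, huv, hwv]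
      simp_all [degDel]
    obtain ⟨w, hw⟩ := card_pos.1 (Nat.pos_of_ne_zero h0)
    have hwv : w = v := by simpa using hnbr hw
    refine Or.inr (Or.inr ⟨le_antisymm ?_ (Nat.pos_of_ne_zero h0), ?_⟩)
    · simpa [deg] using card_le_card hnbr
    · simp only [mem_filter, mem_univ, true_and] at hw
      exact hwv ▸ hw
  calc isolCountDel ω v
      ≤ #(({u | deg ω u = 0} : Finset (Fin n)) ∪ insert v (pendantNbrs ω v)) := card_le_card hsub
    _ ≤ isolCount ω + #(insert v (pendantNbrs ω v)) := card_union_le _ _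
    _ ≤ isolCount ω + 1 + #(pendantNbrs ω v) := by
        have := card_insert_le v (pendantNbrs ω v)
        omega

theorem sum_card_pendantNbrs_le (ω : EdgeIdx n → Bool) : ∑ v, #(pendantNbrs ω v) ≤ n := by
  have hdeg : ∀ u, #({v | deg ω u = 1 ∧ adj ω u v} : Finset (Fin n)) ≤ 1 := by
    intro u
    by_cases hu : deg ω u = 1
    · simp only [hu, true_and]
      exact hu.le
    · simp [hu]
  calc ∑ v, #(pendantNbrs ω v)
      = ∑ u, #({v | deg ω u = 1 ∧ adj ω u v} : Finset (Fin n)) :=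
        (sum_card_bipartiteAbove_eq_sum_card_bipartiteBelow _).symm
    _ ≤ ∑ _u : Fin n, 1 := sum_le_sum fun u _ => hdeg u
    _ = n := by simp

theorem sum_isolCountDel_le (ω : EdgeIdx n → Bool) :
    ∑ v, isolCountDel ω v ≤ n * isolCount ω + 2 * n := by
  calc ∑ v, isolCountDel ω v ≤ ∑ v, (isolCount ω + 1 + #(pendantNbrs ω v)) :=
        sum_le_sum fun v _ => isolCountDel_le ω v
    _ ≤ n * isolCount ω + 2 * n := by
        have := sum_card_pendantNbrs_le ω
        simp only [sum_add_distrib, sum_const, card_univ, Fintype.card_fin, smul_eq_mul]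
        linarith

theorem cast_isolCount_mul_exp_eq_sum (θ : ℝ) (ω : EdgeIdx n → Bool) :
    (isolCount ω : ℝ) * exp (θ * isolCount ω)
      = ∑ v, {ω | deg ω v = 0}.indicator 1 ω * exp (θ * isolCountDel ω v) := by
  have hY : (isolCount ω : ℝ) = ∑ v, {ω | deg ω v = 0}.indicator 1 ω := by
    rw [isolCount, natCast_card_filter]
    simp [Set.indicator_apply]
  nth_rw 1 [hY]
  rw [sum_mul]
  refine sum_congr rfl fun v _ => ?_
  by_cases hv : deg ω v = 0
  · simp [hv, isolCount_eq_isolCountDel hv]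
  · simp [hv]

theorem card_mul_exp_le_sum_exp_isolCountDel {θ : ℝ} (hθ : θ ≤ 0) (ω : EdgeIdx n → Bool) :
    n * exp (θ * (isolCount ω + 2)) ≤ ∑ v, exp (θ * isolCountDel ω v) := by
  have hsum : (∑ v, isolCountDel ω v : ℝ) ≤ n * isolCount ω + 2 * n := by
    exact_mod_cast sum_isolCountDel_le ω
  simpa using card_mul_exp_le_sum_exp univ (fun v => θ * isolCountDel ω v)
    (c := θ * (isolCount ω + 2))
    (by rw [← mul_sum]; simp only [card_univ, Fintype.card_fin]; nlinarith)

end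

section
variable {n : ℕ} {p : ℝ}

theorem isProbabilityMeasure_bern (hp : p ∈ Set.Icc 0 1) : IsProbabilityMeasure (bern p) :=
  ⟨by simp [bern, ← ENNReal.ofReal_add hp.1 (sub_nonneg.2 hp.2)]⟩

theorem isProbabilityMeasure_gnp (hp : p ∈ Set.Icc 0 1) : IsProbabilityMeasure (gnp n p) := by
  have := isProbabilityMeasure_bern hp
  unfold gnp
  infer_instance

theorem gnp_real_deg_eq_zero (hp : p ∈ Set.Icc 0 1) (v : Fin n) :
    (gnp n p).real {ω | deg ω v = 0} = (1 - p) ^ (n - 1) := by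
  have := isProbabilityMeasure_bern hp
  have hbox : {ω | deg ω v = 0} =
      Set.univ.pi fun e => if e ∈ incidentEdges v then {false} else Set.univ := by
    ext ω
    simp only [Set.mem_ofPred_eq, deg_eq_zero_iff, Set.mem_pi, Set.mem_univ, true_implies]
    refine forall_congr' fun e => ?_
    split_ifs <;> simp [*]
  rw [hbox, measureReal_def, gnp, Measure.pi_pi]
  simp only [apply_ite, measure_univ, prod_ite_mem, univ_inter, prod_const, card_incidentEdges]
  simp [bern, hp.2]

theorem indepFun_isolated_isolCountDel (hp : p ∈ Set.Icc 0 1) (v : Fin n)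
    {β : Type*} [MeasurableSpace β] (f : ℕ → β) :
    IndepFun ({ω | deg ω v = 0}.indicator (1 : (EdgeIdx n → Bool) → ℝ))
      (fun ω => f (isolCountDel ω v)) (gnp n p) := by
  have := isProbabilityMeasure_bern hp
  refine indepFun_pi_of_dependsOn .of_discrete .of_discrete (incidentEdges v) ?_ ?_
  · intro ω ω' h
    have : deg ω v = 0 ↔ deg ω' v = 0 := by
      simp only [deg_eq_zero_iff]
      exact forall₂_congr fun e he => by rw [h e he]
    simp [Set.indicator_apply, this]
  · exact fun ω ω' h => congrArg f (dependsOn_isolCountDel v h)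

theorem integral_isolCount_mul_exp (hp : p ∈ Set.Icc 0 1) (θ : ℝ) :
    ∫ ω, (isolCount ω : ℝ) * exp (θ * isolCount ω) ∂gnp n p
      = (1 - p) ^ (n - 1) * ∑ v, ∫ ω, exp (θ * isolCountDel ω v) ∂gnp n p := by
  have := isProbabilityMeasure_gnp (n := n) hp
  simp_rw [cast_isolCount_mul_exp_eq_sum]
  rw [integral_finsetSum _ fun _ _ => .of_finite, mul_sum]
  refine sum_congr rfl fun v _ => ?_
  have hindep := indepFun_isolated_isolCountDel hp v fun k => exp (θ * k)
  rw [hindep.integral_fun_mul_eq_mul_integral .of_discrete .of_discrete,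
    integral_indicator_one .of_discrete, gnp_real_deg_eq_zero hp]

theorem mul_exp_mul_mgf_le_integral (hp : p ∈ Set.Icc 0 1) {θ : ℝ} (hθ : θ ≤ 0) :
    n * (1 - p) ^ (n - 1) * exp (2 * θ) * mgf (fun ω => (isolCount ω : ℝ)) (gnp n p) θ
      ≤ ∫ ω, (isolCount ω : ℝ) * exp (θ * isolCount ω) ∂gnp n p := by
  have := isProbabilityMeasure_gnp (n := n) hp
  rw [integral_isolCount_mul_exp hp, ← integral_finsetSum _ fun _ _ => .of_finite, mgf,
    ← integral_const_mul, ← integral_const_mul]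
  refine integral_mono .of_finite .of_finite fun ω => ?_
  calc n * (1 - p) ^ (n - 1) * exp (2 * θ) * exp (θ * isolCount ω)
      = (1 - p) ^ (n - 1) * (n * exp (θ * (isolCount ω + 2))) := by
        rw [mul_add, exp_add, mul_comm θ 2]; ring
    _ ≤ (1 - p) ^ (n - 1) * ∑ v, exp (θ * isolCountDel ω v) := by
        gcongr
        · exact pow_nonneg (sub_nonneg.2 hp.2) _
        · exact card_mul_exp_le_sum_exp_isolCountDel hθ ω
end

/-- left tail bound for the number of isolated vertices. -/
theorem left_tail_bound (n : ℕ) (hn : 2 ≤ n) (p : ℝ) (hp : p ∈ Set.Ioo (0 : ℝ) 1)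
    (μ σ : ℝ) (hμ : μ = (n : ℝ) * (1 - p) ^ (n - 1))
    (hσ : σ = Real.sqrt ((n : ℝ) * (1 - p) ^ (n - 1)
      * (1 + (n : ℝ) * p * (1 - p) ^ (n - 2) - (1 - p) ^ (n - 2)))) :
    ∀ t : ℝ, 0 ≤ t →
      ((gnp n p) {ω | ((isolCount ω : ℝ) - μ) / σ ≤ -t}).toReal
        ≤ Real.exp (-(t ^ 2 * σ ^ 2) / (4 * μ)) := by
  intro t ht
  have hp' : p ∈ Set.Icc 0 1 := Set.Ioo_subset_Icc_self hp
  have := isProbabilityMeasure_gnp (n := n) hp'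
  have hn0 : (0 : ℝ) < n := by exact_mod_cast (by omega : 0 < n)
  have hq : 0 < 1 - p := sub_pos.2 hp.2
  have hμ0 : 0 < μ := hμ ▸ mul_pos hn0 (pow_pos hq _)
  have hσ0 : 0 < σ := by
    have : (1 - p) ^ (n - 2) ≤ 1 := pow_le_one₀ hq.le (by linarith [hp.1])
    have : 0 < n * p * (1 - p) ^ (n - 2) := mul_pos (mul_pos hn0 hp.1) (pow_pos hq _)
    rw [hσ, ← hμ]
    exact Real.sqrt_pos.2 (mul_pos hμ0 (by linarith))
  have hset : {ω : EdgeIdx n → Bool | ((isolCount ω : ℝ) - μ) / σ ≤ -t}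
      = {ω | (isolCount ω : ℝ) ≤ μ - t * σ} := by
    ext ω
    simp only [Set.mem_ofPred_eq, div_le_iff₀ hσ0]
    constructor <;> intro <;> linarith
  rw [hset, ← measureReal_def]
  convert measure_le_sub_le_exp_of_le_integral_mul_exp (fun _ => .of_finite) hμ0 two_pos
    (fun θ hθ => hμ ▸ mul_exp_mul_mgf_le_integral hp' hθ) (mul_nonneg ht hσ0.le) using 2
  ring

end ErdosRenyiIsolated
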